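/- arXiv:cs/0301019 — 5 statements merged into one kernel-verified Lean document; each statement's English description precedes it below -/
import Mathlib

section
/- Let A be an m×n random matrix, b a random m-vector and c a random n-vector, whose joint distribution is a nondegenerate Gaussian (each entry an independent Gaussian of positive variance, with arbitrary means). Then with probability 1, on the event that the linear program max c·x subject to A x ≤ b, x ≥ 0 is feasible and bounded with unique primal and dual optimal solutions x* and y*, one has V = {j : A_{j,:} x* = b_j} and U = {i : y* A_{:,i} = c_i}, where U = {i : x*_i > 0} and V = {j : y*_j > 0}. -/
open MeasureTheory ProbabilityTheory Matrix
open scoped NNReal ENNReal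

/-- `x` is feasible for the primal linear program `max c·x  s.t.  A x ≤ b, x ≥ 0`. -/
def IsPrimalFeasible {m n : ℕ} (A : Matrix (Fin m) (Fin n) ℝ) (b : Fin m → ℝ)
    (x : Fin n → ℝ) : Prop :=
  A.mulVec x ≤ b ∧ 0 ≤ x

/-- `y` is feasible for the dual linear program `min y·b  s.t.  y A ≥ c, y ≥ 0`. -/
def IsDualFeasible {m n : ℕ} (A : Matrix (Fin m) (Fin n) ℝ) (c : Fin n → ℝ)
    (y : Fin m → ℝ) : Prop :=
  c ≤ Matrix.vecMul y A ∧ 0 ≤ y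

/-- `xs` is an optimal solution of the primal program. -/
def IsPrimalOptimal {m n : ℕ} (A : Matrix (Fin m) (Fin n) ℝ) (b : Fin m → ℝ) (c : Fin n → ℝ)
    (xs : Fin n → ℝ) : Prop :=
  IsPrimalFeasible A b xs ∧ ∀ x, IsPrimalFeasible A b x → c ⬝ᵥ x ≤ c ⬝ᵥ xs

/-- `ys` is an optimal solution of the dual program. -/
def IsDualOptimal {m n : ℕ} (A : Matrix (Fin m) (Fin n) ℝ) (b : Fin m → ℝ) (c : Fin n → ℝ)
    (ys : Fin m → ℝ) : Prop :=
  IsDualFeasible A c ys ∧ ∀ y, IsDualFeasible A c y → ys ⬝ᵥ b ≤ y ⬝ᵥ b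



section LPAux
open Matrix Finset

lemma dp_self_nonneg {E : Type*} [Fintype E] (v : E → ℝ) : 0 ≤ v ⬝ᵥ v :=
  Finset.sum_nonneg fun i _ => mul_self_nonneg _

lemma farkasFin {E : Type*} [Fintype E] :
    ∀ {k : ℕ} (a : Fin k → E → ℝ) (b : E → ℝ),
      (¬ ∃ lam : Fin k → ℝ, (∀ i, 0 ≤ lam i) ∧ ∑ i, lam i • a i = b) →
      ∃ y : E → ℝ, (∀ i, 0 ≤ a i ⬝ᵥ y) ∧ b ⬝ᵥ y < 0 := by
  intro k
  induction k with
  | zero =>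
    intro a b h
    refine ⟨-b, fun i => (Fin.elim0 i), ?_⟩
    have hb : b ≠ 0 := by
      rintro rfl
      exact h ⟨0, fun i => le_rfl, by simp⟩
    have hpos : 0 < b ⬝ᵥ b :=
      lt_of_le_of_ne (dp_self_nonneg b) (fun h' => hb (dotProduct_self_eq_zero.mp h'.symm))
    simpa [dotProduct_neg] using neg_neg_iff_pos.mpr hpos
  | succ k ih =>
    intro a b h
    set a' : Fin k → E → ℝ := fun i => a i.castSucc with ha'
    set al : E → ℝ := a (Fin.last k) with hal
    have h' : ¬ ∃ lam : Fin k → ℝ, (∀ i, 0 ≤ lam i) ∧ ∑ i, lam i • a' i = b := by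
      rintro ⟨lam, hlam, hsum⟩
      refine h ⟨Fin.snoc lam 0, ?_, ?_⟩
      · intro i
        refine Fin.lastCases ?_ ?_ i <;> simp [hlam]
      · rw [Fin.sum_univ_castSucc]
        simpa using hsum
    obtain ⟨y, hy, hby⟩ := ih a' b h'
    by_cases hl : 0 ≤ al ⬝ᵥ y
    · exact ⟨y, fun i => Fin.lastCases hl (fun i => hy i) i, hby⟩
    push_neg at hl
    set α : ℝ := al ⬝ᵥ y with hα
    have hαne : α ≠ 0 := ne_of_lt hl
    set p : Fin k → E → ℝ := fun i => a' i - (a' i ⬝ᵥ y / α) • al with hp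
    set q : E → ℝ := b - (b ⬝ᵥ y / α) • al with hq
    have hq' : ¬ ∃ lam : Fin k → ℝ, (∀ i, 0 ≤ lam i) ∧ ∑ i, lam i • p i = q := by
      rintro ⟨lam, hlam, hsum⟩
      set γ : ℝ := (b ⬝ᵥ y - ∑ i, lam i * (a' i ⬝ᵥ y)) / α with hγ
      have hγpos : 0 < γ := by
        apply div_pos_of_neg_of_neg _ hl
        have : 0 ≤ ∑ i, lam i * (a' i ⬝ᵥ y) :=
          Finset.sum_nonneg fun i _ => mul_nonneg (hlam i) (hy i)
        linarith
      have hb : ∀ e, b e = (∑ i, lam i * a' i e) + γ * al e := by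
        intro e
        have hpt : ∑ i, lam i * (a' i e - (a' i ⬝ᵥ y / α) * al e) = b e - (b ⬝ᵥ y / α) * al e := by
          have := congrFun hsum e
          simpa [Finset.sum_apply, hp, hq, smul_eq_mul, mul_sub] using this
        have hsp : ∑ i, lam i * (a' i e - (a' i ⬝ᵥ y / α) * al e)
            = (∑ i, lam i * a' i e) - (∑ i, lam i * (a' i ⬝ᵥ y)) / α * al e := by
          have h2 : (∑ i, lam i * (a' i ⬝ᵥ y)) / α * al e
              = ∑ i, lam i * ((a' i ⬝ᵥ y / α) * al e) := by
            rw [Finset.sum_div, Finset.sum_mul]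
            exact Finset.sum_congr rfl (fun i _ => by ring)
          rw [h2, ← Finset.sum_sub_distrib]
          exact Finset.sum_congr rfl (fun i _ => by ring)
        rw [hsp] at hpt
        rw [hγ]
        field_simp at hpt ⊢
        linarith
      refine h ⟨Fin.snoc lam γ, ?_, ?_⟩
      · intro i
        refine Fin.lastCases ?_ ?_ i <;> simp [hlam, hγpos.le]
      · rw [Fin.sum_univ_castSucc]
        funext e
        simp only [Fin.snoc_castSucc, Fin.snoc_last, Finset.sum_apply, Pi.add_apply,
          Pi.smul_apply, smul_eq_mul]
        rw [hb e]
    obtain ⟨z, hz, hqz⟩ := ih p q hq'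
    refine ⟨z - (al ⬝ᵥ z / α) • y, fun i => ?_, ?_⟩
    · refine Fin.lastCases ?_ ?_ i
      · have : al ⬝ᵥ (z - (al ⬝ᵥ z / α) • y) = 0 := by
          rw [dotProduct_sub, dotProduct_smul, smul_eq_mul, ← hα, div_mul_cancel₀ _ hαne,
            sub_self]
        rw [← hal, this]
      · intro i
        have heq : a' i ⬝ᵥ (z - (al ⬝ᵥ z / α) • y) = p i ⬝ᵥ z := by
          simp only [hp, dotProduct_sub, sub_dotProduct, dotProduct_smul, smul_dotProduct,
            smul_eq_mul]
          ring
        show 0 ≤ a' i ⬝ᵥ (z - (al ⬝ᵥ z / α) • y)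
        rw [heq]
        exact hz i
    · have heq : b ⬝ᵥ (z - (al ⬝ᵥ z / α) • y) = q ⬝ᵥ z := by
        simp only [hq, dotProduct_sub, sub_dotProduct, dotProduct_smul, smul_dotProduct,
          smul_eq_mul]
        ring
      rw [heq]; exact hqz


lemma farkasGen {E ι : Type*} [Fintype E] [Fintype ι] (a : ι → E → ℝ) (b : E → ℝ)
    (h : ¬ ∃ lam : ι → ℝ, (∀ i, 0 ≤ lam i) ∧ ∑ i, lam i • a i = b) :
    ∃ y : E → ℝ, (∀ i, 0 ≤ a i ⬝ᵥ y) ∧ b ⬝ᵥ y < 0 := by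
  classical
  set e := Fintype.equivFin ι with he
  have h' : ¬ ∃ lam : Fin (Fintype.card ι) → ℝ, (∀ i, 0 ≤ lam i) ∧
      ∑ i, lam i • (a ∘ e.symm) i = b := by
    rintro ⟨lam, h1, h2⟩
    refine h ⟨lam ∘ e, fun i => h1 _, ?_⟩
    rw [← h2]
    exact Fintype.sum_equiv e _ _ (fun x => by simp)
  obtain ⟨y, hy, hby⟩ := farkasFin (a ∘ e.symm) b h'
  exact ⟨y, fun i => by simpa using hy (e i), hby⟩

lemma sum_neg_div {n : ℕ} (f z : Fin n → ℝ) (β : ℝ) :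
    ∑ i, -(f i * (z i / β)) = -((∑ i, f i * z i) / β) := by
  calc ∑ i, -(f i * (z i / β)) = ∑ i, -(f i * z i) / β :=
        Finset.sum_congr rfl (fun i _ => by ring)
    _ = (∑ i, -(f i * z i)) / β := (Finset.sum_div _ _ _).symm
    _ = -((∑ i, f i * z i) / β) := by rw [Finset.sum_neg_distrib, neg_div]

lemma weak_duality {m n : ℕ} {A : Matrix (Fin m) (Fin n) ℝ} {b : Fin m → ℝ} {c : Fin n → ℝ}
    {x : Fin n → ℝ} {y : Fin m → ℝ} (hx : IsPrimalFeasible A b x) (hy : IsDualFeasible A c y) :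
    c ⬝ᵥ x ≤ y ⬝ᵥ b := by
  have h1 : c ⬝ᵥ x ≤ (Matrix.vecMul y A) ⬝ᵥ x :=
    Finset.sum_le_sum fun i _ => mul_le_mul_of_nonneg_right (hy.1 i) (hx.2 i)
  have h2 : (Matrix.vecMul y A) ⬝ᵥ x = y ⬝ᵥ (A.mulVec x) := (dotProduct_mulVec y A x).symm
  have h3 : y ⬝ᵥ (A.mulVec x) ≤ y ⬝ᵥ b :=
    Finset.sum_le_sum fun j _ => mul_le_mul_of_nonneg_left (hx.1 j) (hy.2 j)
  linarith [h1, h2.le, h2.ge, h3]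

lemma strong_duality {m n : ℕ} {A : Matrix (Fin m) (Fin n) ℝ} {b : Fin m → ℝ} {c : Fin n → ℝ}
    {xs : Fin n → ℝ} (hxs : IsPrimalOptimal A b c xs) :
    ∃ y, IsDualFeasible A c y ∧ y ⬝ᵥ b = c ⬝ᵥ xs := by
  classical
  set v : ℝ := c ⬝ᵥ xs with hv
  set g : (Fin m ⊕ (Fin n ⊕ Unit)) → ((Fin n ⊕ Unit) → ℝ) :=
    Sum.elim (fun j => Sum.elim (fun i => A j i) (fun _ => b j))
      (Sum.elim (fun i => Sum.elim (fun i' => if i' = i then (-1 : ℝ) else 0) (fun _ => 0))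
        (fun _ => Sum.elim (fun _ => (0:ℝ)) (fun _ => 1))) with hg
  set t : (Fin n ⊕ Unit) → ℝ := Sum.elim c (fun _ => v) with ht
  by_cases hex : ∃ lam : (Fin m ⊕ (Fin n ⊕ Unit)) → ℝ, (∀ i, 0 ≤ lam i) ∧ ∑ i, lam i • g i = t
  · obtain ⟨lam, hlam, hsum⟩ := hex
    set y : Fin m → ℝ := fun j => lam (Sum.inl j) with hy
    have hcomp : ∀ e : Fin n ⊕ Unit, ∑ i, lam i * g i e = t e := by
      intro e
      have := congrFun hsum e
      simpa [Finset.sum_apply] using this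
    have hfeas : IsDualFeasible A c y := by
      refine ⟨fun i => ?_, fun j => hlam _⟩
      have := hcomp (Sum.inl i)
      rw [Fintype.sum_sum_type] at this
      rw [Fintype.sum_sum_type] at this
      simp only [hg, ht, Sum.elim_inl, Sum.elim_inr] at this
      have hs1 : ∑ i' : Fin n, lam (Sum.inr (Sum.inl i')) *
          (if (i : Fin n) = i' then (-1:ℝ) else 0) = -(lam (Sum.inr (Sum.inl i))) := by
        rw [Finset.sum_eq_single i]
        · simp
        · intro b' _ hb'; simp [Ne.symm hb']
        · simp
      rw [hs1] at this
      simp only [Finset.univ_unique, Finset.sum_const, mul_zero, smul_zero, add_zero] at this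
      have hv2 : Matrix.vecMul y A i = ∑ j, lam (Sum.inl j) * A j i := by
        simp [Matrix.vecMul, dotProduct, hy, mul_comm]
      rw [hv2]
      have := this
      nlinarith [hlam (Sum.inr (Sum.inl i)), this]
    refine ⟨y, hfeas, le_antisymm ?_ (weak_duality hxs.1 hfeas)⟩
    have := hcomp (Sum.inr ())
    rw [Fintype.sum_sum_type, Fintype.sum_sum_type] at this
    simp only [hg, ht, Sum.elim_inl, Sum.elim_inr, mul_zero, mul_one,
      Finset.sum_const_zero] at this
    have hyb : y ⬝ᵥ b = ∑ j, lam (Sum.inl j) * b j := rfl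
    rw [hyb]
    simp only [Finset.univ_unique, Finset.sum_singleton] at this
    nlinarith [hlam (Sum.inr (Sum.inr ())), this]
  · exfalso
    obtain ⟨w, hw, htw⟩ := farkasGen g t hex
    set z : Fin n → ℝ := fun i => w (Sum.inl i) with hz
    set β : ℝ := w (Sum.inr ()) with hβ
    have hdp : ∀ u : (Fin n ⊕ Unit) → ℝ, u ⬝ᵥ w = (fun i => u (Sum.inl i)) ⬝ᵥ z + u (Sum.inr ()) * β := by
      intro u
      rw [show (u ⬝ᵥ w) = ∑ e, u e * w e from rfl, Fintype.sum_sum_type]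
      simp [hz, hβ, dotProduct]
    have hrow : ∀ j, 0 ≤ (fun i => A j i) ⬝ᵥ z + b j * β := fun j => by
      have := hw (Sum.inl j); rwa [hdp] at this
    have hzneg : ∀ i, z i ≤ 0 := by
      intro i
      have := hw (Sum.inr (Sum.inl i))
      rw [hdp] at this
      simp only [hg, Sum.elim_inl, Sum.elim_inr, zero_mul, add_zero] at this
      have hs1 : (fun i' => if i' = i then (-1:ℝ) else 0) ⬝ᵥ z = -(z i) := by
        rw [show ((fun i' => if i' = i then (-1:ℝ) else 0) ⬝ᵥ z) = ∑ i', (if i' = i then (-1:ℝ) else 0) * z i' from rfl]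
        rw [Finset.sum_eq_single i] <;> simp +contextual
      rw [hs1] at this
      linarith
    have hβnn : 0 ≤ β := by
      have := hw (Sum.inr (Sum.inr ()))
      rw [hdp] at this
      simpa [hg] using this
    have hobj : c ⬝ᵥ z + v * β < 0 := by
      have := htw; rw [hdp] at this
      simpa [ht] using this
    rcases hβnn.lt_or_eq with hβpos | hβzero
    · set x : Fin n → ℝ := fun i => -(z i) / β with hx
      have hfeas : IsPrimalFeasible A b x := by
        constructor
        · intro j
          have h1 := hrow j
          have : A.mulVec x j = -((fun i => A j i) ⬝ᵥ z) / β := by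
            simp only [Matrix.mulVec, hx, dotProduct, neg_div, mul_div_assoc, mul_neg]
            exact sum_neg_div _ _ _
          rw [this]
          rw [div_le_iff₀ hβpos]
          nlinarith
        · intro i
          exact div_nonneg (neg_nonneg.mpr (hzneg i)) hβpos.le
      have hle := hxs.2 x hfeas
      have : c ⬝ᵥ x = -(c ⬝ᵥ z) / β := by
        simp only [hx, dotProduct, neg_div, mul_div_assoc, mul_neg]
        exact sum_neg_div _ _ _
      rw [this] at hle
      rw [div_le_iff₀ hβpos] at hle
      nlinarith
    · -- β = 0
      set x : Fin n → ℝ := xs - z with hx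
      have hfeas : IsPrimalFeasible A b x := by
        constructor
        · intro j
          have h1 := hrow j
          rw [← hβzero] at h1
          simp only [mul_zero, add_zero] at h1
          have : A.mulVec x j = A.mulVec xs j - (fun i => A j i) ⬝ᵥ z := by
            rw [hx, Matrix.mulVec_sub]; rfl
          rw [this]
          have := hxs.1.1 j
          linarith
        · intro i
          have := hxs.1.2 i
          have h2 := hzneg i
          simp only [hx, Pi.sub_apply]
          linarith
      have hle := hxs.2 x hfeas
      have hcx : c ⬝ᵥ x = v - c ⬝ᵥ z := by
        rw [hx, dotProduct_sub, hv]
      rw [← hβzero] at hobj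
      simp only [mul_zero, add_zero] at hobj
      linarith


/-- The value of any dual optimal solution equals the primal optimal value. -/
lemma dual_value {m n : ℕ} {A : Matrix (Fin m) (Fin n) ℝ} {b : Fin m → ℝ} {c : Fin n → ℝ}
    {xs : Fin n → ℝ} {ys : Fin m → ℝ} (hxs : IsPrimalOptimal A b c xs)
    (hys : IsDualOptimal A b c ys) : ys ⬝ᵥ b = c ⬝ᵥ xs := by
  obtain ⟨y, hyf, hyv⟩ := strong_duality hxs
  have h1 := hys.2 y hyf
  have h2 := weak_duality hxs.1 hys.1
  linarith

/-- Complementary slackness. -/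
lemma comp_slack {m n : ℕ} {A : Matrix (Fin m) (Fin n) ℝ} {b : Fin m → ℝ} {c : Fin n → ℝ}
    {xs : Fin n → ℝ} {ys : Fin m → ℝ} (hxs : IsPrimalOptimal A b c xs)
    (hys : IsDualOptimal A b c ys) :
    (∀ j, 0 < ys j → A.mulVec xs j = b j) ∧ (∀ i, 0 < xs i → Matrix.vecMul ys A i = c i) := by
  have hv := dual_value hxs hys
  have hS1nn : ∀ j ∈ Finset.univ, 0 ≤ ys j * (b j - A.mulVec xs j) := fun j _ =>
    mul_nonneg (hys.1.2 j) (sub_nonneg.mpr (hxs.1.1 j))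
  have hS2nn : ∀ i ∈ Finset.univ, 0 ≤ (Matrix.vecMul ys A i - c i) * xs i := fun i _ =>
    mul_nonneg (sub_nonneg.mpr (hys.1.1 i)) (hxs.1.2 i)
  have hsum : (∑ j, ys j * (b j - A.mulVec xs j)) + ∑ i, (Matrix.vecMul ys A i - c i) * xs i
      = 0 := by
    have e1 : ∑ j, ys j * (b j - A.mulVec xs j) = ys ⬝ᵥ b - ys ⬝ᵥ (A.mulVec xs) := by
      have h' : ∀ j ∈ Finset.univ, ys j * (b j - A.mulVec xs j)
          = ys j * b j - ys j * A.mulVec xs j := fun j _ => by ring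
      rw [Finset.sum_congr rfl h', Finset.sum_sub_distrib]
      rfl
    have e2 : ∑ i, (Matrix.vecMul ys A i - c i) * xs i
        = (Matrix.vecMul ys A) ⬝ᵥ xs - c ⬝ᵥ xs := by
      have h' : ∀ i ∈ Finset.univ, (Matrix.vecMul ys A i - c i) * xs i
          = Matrix.vecMul ys A i * xs i - c i * xs i := fun i _ => by ring
      rw [Finset.sum_congr rfl h', Finset.sum_sub_distrib]
      rfl
    have e3 : ys ⬝ᵥ (A.mulVec xs) = (Matrix.vecMul ys A) ⬝ᵥ xs := dotProduct_mulVec ys A xs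
    rw [e1, e2, e3, hv]; ring
  have hS1 : ∀ j ∈ Finset.univ, ys j * (b j - A.mulVec xs j) = 0 := by
    rw [← Finset.sum_eq_zero_iff_of_nonneg hS1nn]
    have := Finset.sum_nonneg hS2nn
    linarith [Finset.sum_nonneg hS1nn]
  have hS2 : ∀ i ∈ Finset.univ, (Matrix.vecMul ys A i - c i) * xs i = 0 := by
    rw [← Finset.sum_eq_zero_iff_of_nonneg hS2nn]
    have := Finset.sum_nonneg hS1nn
    linarith [Finset.sum_nonneg hS2nn]
  constructor
  · intro j hj
    have := hS1 j (Finset.mem_univ j)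
    rcases mul_eq_zero.mp this with h | h
    · exact absurd h (ne_of_gt hj)
    · linarith [sub_eq_zero.mp h]
  · intro i hi
    have := hS2 i (Finset.mem_univ i)
    rcases mul_eq_zero.mp this with h | h
    · linarith [sub_eq_zero.mp h]
    · exact absurd h (ne_of_gt hi)

lemma single_mul_sum {m : ℕ} (j : Fin m) (f : Fin m → ℝ) :
    ∑ x, (Pi.single j (1:ℝ) : Fin m → ℝ) x * f x = f j := by
  rw [Finset.sum_eq_single j]
  · simp
  · intro b _ hb; simp [Pi.single_apply, hb]
  · simp

/-- Goldman–Tucker under uniqueness: a tight primal constraint has positive dual variable. -/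
lemma tight_imp_pos {m n : ℕ} {A : Matrix (Fin m) (Fin n) ℝ} {b : Fin m → ℝ} {c : Fin n → ℝ}
    {xs : Fin n → ℝ} {ys : Fin m → ℝ} (hxs : IsPrimalOptimal A b c xs)
    (huniq : ∀ x, IsPrimalOptimal A b c x → x = xs)
    (hys : IsDualOptimal A b c ys) (huniqd : ∀ y, IsDualOptimal A b c y → y = ys)
    (j : Fin m) (hj : A.mulVec xs j = b j) : 0 < ys j := by
  classical
  set v : ℝ := c ⬝ᵥ xs with hv
  have hysb : ys ⬝ᵥ b = v := dual_value hxs hys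
  -- auxiliary LP
  set A' : Matrix (Fin (m+1)) (Fin n) ℝ := Matrix.of (Fin.snoc (fun j' => A j') (-c)) with hA'
  set b' : Fin (m+1) → ℝ := Fin.snoc b (-v) with hb'
  set c' : Fin n → ℝ := -(fun i => A j i) with hc'
  have hrowcast : ∀ (j' : Fin m) (x : Fin n → ℝ), A'.mulVec x j'.castSucc = A.mulVec x j' := by
    intro j' x
    simp [hA', Matrix.mulVec, Fin.snoc_castSucc]
  have hrowlast : ∀ (x : Fin n → ℝ), A'.mulVec x (Fin.last m) = -(c ⬝ᵥ x) := by
    intro x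
    simp [hA', Matrix.mulVec, Fin.snoc_last, dotProduct]
  have hauxfeas : ∀ x, IsPrimalFeasible A' b' x ↔ (IsPrimalFeasible A b x ∧ v ≤ c ⬝ᵥ x) := by
    intro x
    constructor
    · rintro ⟨h1, h2⟩
      refine ⟨⟨fun j' => ?_, h2⟩, ?_⟩
      · have := h1 j'.castSucc
        rwa [hrowcast, hb', Fin.snoc_castSucc] at this
      · have := h1 (Fin.last m)
        rw [hrowlast, hb', Fin.snoc_last] at this
        linarith
    · rintro ⟨⟨h1, h2⟩, h3⟩
      refine ⟨fun i => ?_, h2⟩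
      refine Fin.lastCases ?_ ?_ i
      · rw [hrowlast, hb', Fin.snoc_last]; linarith
      · intro j'
        rw [hrowcast, hb', Fin.snoc_castSucc]; exact h1 j'
  have hauxopt : IsPrimalOptimal A' b' c' xs := by
    refine ⟨(hauxfeas xs).mpr ⟨hxs.1, le_rfl⟩, ?_⟩
    intro x hx
    obtain ⟨hfx, hvx⟩ := (hauxfeas x).mp hx
    have : IsPrimalOptimal A b c x := ⟨hfx, fun x'' hx'' => le_trans (hxs.2 x'' hx'') hvx⟩
    rw [huniq x this]
  obtain ⟨w, hwf, hwv⟩ := strong_duality hauxopt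
  set y : Fin m → ℝ := fun j' => w j'.castSucc with hy
  set t : ℝ := w (Fin.last m) with htdef
  have hwA : ∀ i, -(A j i) ≤ Matrix.vecMul y A i - t * c i := by
    intro i
    have := hwf.1 i
    rw [hc'] at this
    have hvm : Matrix.vecMul w A' i = Matrix.vecMul y A i + t * (-(c i)) := by
      simp only [Matrix.vecMul, dotProduct, hA']
      rw [Fin.sum_univ_castSucc]
      simp [Fin.snoc_castSucc, Fin.snoc_last, hy, htdef]
    rw [hvm] at this
    simp only [Pi.neg_apply] at this
    linarith
  have hwb : y ⬝ᵥ b - t * v = -(b j) := by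
    have := hwv
    have hd : w ⬝ᵥ b' = y ⬝ᵥ b + t * (-v) := by
      simp only [dotProduct, hb']
      rw [Fin.sum_univ_castSucc]
      simp [Fin.snoc_castSucc, Fin.snoc_last, hy, htdef]
    have hc'xs : c' ⬝ᵥ xs = -(b j) := by
      rw [hc']
      have : (-(fun i => A j i)) ⬝ᵥ xs = -((fun i => A j i) ⬝ᵥ xs) := neg_dotProduct _ _
      rw [this]
      have : (fun i => A j i) ⬝ᵥ xs = A.mulVec xs j := rfl
      rw [this, hj]
    rw [hd, hc'xs] at this
    linarith
  have hynn : ∀ j', 0 ≤ y j' := fun j' => hwf.2 j'.castSucc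
  have htnn : 0 ≤ t := hwf.2 (Fin.last m)
  set e : Fin m → ℝ := (Pi.single j (1:ℝ) : Fin m → ℝ) with he
  have hse : ∀ f : Fin m → ℝ, ∑ x, e x * f x = f j := fun f => single_mul_sum j f
  have henn : ∀ j', 0 ≤ e j' := by
    intro j'
    by_cases h : j' = j <;> simp [he, Pi.single_apply, h]
  have hej : e j = 1 := by simp [he]
  rcases htnn.lt_or_eq with htpos | htzero
  · -- t > 0 : (y + e_j)/t is dual optimal
    set yb : Fin m → ℝ := fun j' => (y j' + e j') / t with hyb
    have key : ∀ f : Fin m → ℝ, ∑ x, yb x * f x = ((∑ x, y x * f x) + f j) / t := by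
      intro f
      rw [← hse f, ← Finset.sum_add_distrib, Finset.sum_div]
      exact Finset.sum_congr rfl (fun x _ => by rw [hyb]; ring)
    have hfeas : IsDualFeasible A c yb := by
      constructor
      · intro i
        have hvm : Matrix.vecMul yb A i = ((Matrix.vecMul y A i) + A j i) / t := key _
        rw [hvm, le_div_iff₀ htpos]
        have := hwA i
        nlinarith
      · intro j'
        exact div_nonneg (add_nonneg (hynn j') (henn j')) htpos.le
    have hval : yb ⬝ᵥ b = v := by
      have h1 : yb ⬝ᵥ b = ((y ⬝ᵥ b) + b j) / t := key b
      rw [h1, div_eq_iff (ne_of_gt htpos)]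
      linarith
    have hopt : IsDualOptimal A b c yb := by
      refine ⟨hfeas, fun y0 hy0 => ?_⟩
      rw [hval, hv]
      exact weak_duality hxs.1 hy0
    have heq := congrFun (huniqd yb hopt) j
    rw [hyb] at heq
    simp only [hej] at heq
    rw [← heq]
    exact div_pos (by linarith [hynn j]) htpos
  · -- t = 0 : ys + y + e_j is dual optimal, contradiction
    exfalso
    rw [← htzero] at hwA hwb
    simp only [zero_mul, sub_zero] at hwA hwb
    set yb : Fin m → ℝ := fun j' => ys j' + y j' + e j' with hyb
    have key : ∀ f : Fin m → ℝ, ∑ x, yb x * f x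
        = (∑ x, ys x * f x) + (∑ x, y x * f x) + f j := by
      intro f
      rw [← hse f, ← Finset.sum_add_distrib, ← Finset.sum_add_distrib]
      exact Finset.sum_congr rfl (fun x _ => by rw [hyb]; ring)
    have hfeas : IsDualFeasible A c yb := by
      constructor
      · intro i
        have hvm : Matrix.vecMul yb A i
            = Matrix.vecMul ys A i + Matrix.vecMul y A i + A j i := key _
        rw [hvm]
        have h1 := hys.1.1 i
        have h2 := hwA i
        linarith
      · intro j'
        have h0 : yb j' = ys j' + y j' + e j' := rfl
        rw [h0]
        linarith [hys.1.2 j', hynn j', henn j']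
    have hval : yb ⬝ᵥ b = v := by
      have h1 : yb ⬝ᵥ b = ys ⬝ᵥ b + y ⬝ᵥ b + b j := key b
      rw [h1, hysb]
      linarith
    have hopt : IsDualOptimal A b c yb := by
      refine ⟨hfeas, fun y0 hy0 => ?_⟩
      rw [hval, hv]
      exact weak_duality hxs.1 hy0
    have heq := congrFun (huniqd yb hopt) j
    rw [hyb] at heq
    simp only [hej] at heq
    linarith [hynn j]


section Transpose
variable {m n : ℕ} (A : Matrix (Fin m) (Fin n) ℝ) (b : Fin m → ℝ) (c : Fin n → ℝ)

lemma primal_feasible_transpose (y : Fin m → ℝ) :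
    IsPrimalFeasible (-Aᵀ) (-c) y ↔ IsDualFeasible A c y := by
  unfold IsPrimalFeasible IsDualFeasible
  rw [Matrix.neg_mulVec, Matrix.mulVec_transpose]
  constructor
  · rintro ⟨h1, h2⟩
    exact ⟨fun i => by have := h1 i; simp only [Pi.neg_apply] at this; linarith, h2⟩
  · rintro ⟨h1, h2⟩
    exact ⟨fun i => by have := h1 i; simp only [Pi.neg_apply]; linarith, h2⟩

lemma dual_feasible_transpose (x : Fin n → ℝ) :
    IsDualFeasible (-Aᵀ) (-b) x ↔ IsPrimalFeasible A b x := by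
  unfold IsPrimalFeasible IsDualFeasible
  rw [Matrix.vecMul_neg, Matrix.vecMul_transpose]
  constructor
  · rintro ⟨h1, h2⟩
    exact ⟨fun j => by have := h1 j; simp only [Pi.neg_apply] at this; linarith, h2⟩
  · rintro ⟨h1, h2⟩
    exact ⟨fun j => by have := h1 j; simp only [Pi.neg_apply]; linarith, h2⟩

lemma primal_optimal_transpose (y : Fin m → ℝ) :
    IsPrimalOptimal (-Aᵀ) (-c) (-b) y ↔ IsDualOptimal A b c y := by
  unfold IsPrimalOptimal IsDualOptimal
  constructor
  · rintro ⟨h1, h2⟩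
    refine ⟨(primal_feasible_transpose A c y).mp h1, fun y0 hy0 => ?_⟩
    have := h2 y0 ((primal_feasible_transpose A c y0).mpr hy0)
    rw [neg_dotProduct, neg_dotProduct] at this
    rw [dotProduct_comm y b, dotProduct_comm y0 b]
    linarith
  · rintro ⟨h1, h2⟩
    refine ⟨(primal_feasible_transpose A c y).mpr h1, fun y0 hy0 => ?_⟩
    have := h2 y0 ((primal_feasible_transpose A c y0).mp hy0)
    rw [neg_dotProduct, neg_dotProduct]
    rw [dotProduct_comm y b, dotProduct_comm y0 b] at this
    linarith

lemma dual_optimal_transpose (x : Fin n → ℝ) :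
    IsDualOptimal (-Aᵀ) (-c) (-b) x ↔ IsPrimalOptimal A b c x := by
  unfold IsPrimalOptimal IsDualOptimal
  constructor
  · rintro ⟨h1, h2⟩
    refine ⟨(dual_feasible_transpose A b x).mp h1, fun x0 hx0 => ?_⟩
    have := h2 x0 ((dual_feasible_transpose A b x0).mpr hx0)
    rw [dotProduct_neg, dotProduct_neg] at this
    rw [dotProduct_comm c x, dotProduct_comm c x0]
    linarith
  · rintro ⟨h1, h2⟩
    refine ⟨(dual_feasible_transpose A b x).mpr h1, fun x0 hx0 => ?_⟩
    have := h2 x0 ((dual_feasible_transpose A b x0).mp hx0)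
    rw [dotProduct_neg, dotProduct_neg]
    rw [dotProduct_comm c x, dotProduct_comm c x0] at this
    linarith

end Transpose

/-- Deterministic strict complementary slackness under uniqueness. -/
lemma strict_comp_slack {m n : ℕ} (A : Matrix (Fin m) (Fin n) ℝ) (b : Fin m → ℝ)
    (c : Fin n → ℝ) (xs : Fin n → ℝ) (ys : Fin m → ℝ)
    (hup : ∃! x, IsPrimalOptimal A b c x) (hud : ∃! y, IsDualOptimal A b c y)
    (hxs : IsPrimalOptimal A b c xs) (hys : IsDualOptimal A b c ys) :
    ({j | 0 < ys j} = {j | A.mulVec xs j = b j} ∧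
      {i | 0 < xs i} = {i | Matrix.vecMul ys A i = c i}) := by
  have huniq : ∀ x, IsPrimalOptimal A b c x → x = xs := fun x hx => hup.unique hx hxs
  have huniqd : ∀ y, IsDualOptimal A b c y → y = ys := fun y hy => hud.unique hy hys
  obtain ⟨hcs1, hcs2⟩ := comp_slack hxs hys
  constructor
  · ext j
    simp only [Set.mem_setOf_eq]
    exact ⟨hcs1 j, tight_imp_pos hxs huniq hys huniqd j⟩
  · ext i
    simp only [Set.mem_setOf_eq]
    refine ⟨hcs2 i, fun hi => ?_⟩
    -- transpose: xs is dual optimal of (-Aᵀ, -c, -b), ys is primal optimal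
    have hxs' : IsDualOptimal (-Aᵀ) (-c) (-b) xs := (dual_optimal_transpose A b c xs).mpr hxs
    have hys' : IsPrimalOptimal (-Aᵀ) (-c) (-b) ys := (primal_optimal_transpose A b c ys).mpr hys
    have huniq' : ∀ y, IsPrimalOptimal (-Aᵀ) (-c) (-b) y → y = ys := fun y hy =>
      huniqd y ((primal_optimal_transpose A b c y).mp hy)
    have huniqd' : ∀ x, IsDualOptimal (-Aᵀ) (-c) (-b) x → x = xs := fun x hx =>
      huniq x ((dual_optimal_transpose A b c x).mp hx)
    refine tight_imp_pos hys' huniq' hxs' huniqd' i ?_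
    rw [Matrix.neg_mulVec, Matrix.mulVec_transpose]
    simp only [Pi.neg_apply]
    rw [hi]


end LPAux

/-- With probability 1, for a jointly nondegenerate Gaussian linear program, on the event that
it is feasible and bounded with unique primal and dual optimal solutions `xs`, `ys`, the set
`V = {j : y*_j > 0}` equals the set of tight primal constraints and `U = {i : x*_i > 0}` equals
the set of tight dual constraints. -/
theorem generic_U_V_eq_tight {m n : ℕ}
    (meanA : Fin m → Fin n → ℝ) (varA : Fin m → Fin n → ℝ≥0)
    (meanb : Fin m → ℝ) (varb : Fin m → ℝ≥0)
    (meanc : Fin n → ℝ) (varc : Fin n → ℝ≥0)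
    (hvA : ∀ i j, 0 < varA i j) (hvb : ∀ j, 0 < varb j) (hvc : ∀ i, 0 < varc i)
    (μ : Measure ((Fin m → Fin n → ℝ) × (Fin m → ℝ) × (Fin n → ℝ)))
    (hμ : μ =
      (Measure.pi fun i => Measure.pi fun j => gaussianReal (meanA i j) (varA i j)).prod
        ((Measure.pi fun j => gaussianReal (meanb j) (varb j)).prod
          (Measure.pi fun i => gaussianReal (meanc i) (varc i)))) :
    ∀ᵐ ω ∂μ, ∀ xs ys,
      (∃! x, IsPrimalOptimal (Matrix.of ω.1) ω.2.1 ω.2.2 x) →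
      (∃! y, IsDualOptimal (Matrix.of ω.1) ω.2.1 ω.2.2 y) →
      IsPrimalOptimal (Matrix.of ω.1) ω.2.1 ω.2.2 xs →
      IsDualOptimal (Matrix.of ω.1) ω.2.1 ω.2.2 ys →
      ({j | 0 < ys j} = {j | (Matrix.of ω.1).mulVec xs j = ω.2.1 j} ∧
        {i | 0 < xs i} = {i | Matrix.vecMul ys (Matrix.of ω.1) i = ω.2.2 i}) := by
  refine Filter.Eventually.of_forall fun ω xs ys hup hud hxs hys => ?_
  exact strict_comp_slack (Matrix.of ω.1) ω.2.1 ω.2.2 xs ys hup hud hxs hys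
end

section
/- Let x be primal feasible (A x ≤ b, x ≥ 0) for a bounded linear program with unique primal and dual optimal solutions x*, y*, where strong duality c·x* = y*·A·x* = y*·b holds, A_{V,:} x* = b_V, and y*_j = 0 for j ∉ V. Then c·(x* − x) ≥ α_D · ‖A_{V,:}(x* − x)‖, where α_D = min_{j ∈ V} y*_j and ‖·‖ is the Euclidean norm. -/
open MeasureTheory ProbabilityTheory Matrix
open scoped NNReal ENNReal

/-- `α_P = min_{i ∈ U} x*_i`, where `U = {i : x*_i > 0}` (junk value `0` if `U = ∅`). -/
noncomputable def alphaP {n : ℕ} (xs : Fin n → ℝ) : ℝ :=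
  ⨅ i : {i : Fin n // 0 < xs i}, xs i.1

/-- `α_D = min_{j ∈ V} y*_j`, where `V = {j : y*_j > 0}` (junk value `0` if `V = ∅`). -/
noncomputable def alphaD {m : ℕ} (ys : Fin m → ℝ) : ℝ :=
  ⨅ j : {j : Fin m // 0 < ys j}, ys j.1

/-- `β_P = min_{j ∉ V} (b_j - A_{j,:} x*)`. -/
noncomputable def betaP {m n : ℕ} (A : Matrix (Fin m) (Fin n) ℝ) (b : Fin m → ℝ)
    (xs : Fin n → ℝ) (ys : Fin m → ℝ) : ℝ :=
  ⨅ j : {j : Fin m // ¬ 0 < ys j}, (b j.1 - A.mulVec xs j.1)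

/-- `β_D = min_{i ∉ U} (y* A_{:,i} - c_i)`. -/
noncomputable def betaD {m n : ℕ} (A : Matrix (Fin m) (Fin n) ℝ) (c : Fin n → ℝ)
    (xs : Fin n → ℝ) (ys : Fin m → ℝ) : ℝ :=
  ⨅ i : {i : Fin n // ¬ 0 < xs i}, (Matrix.vecMul ys A i.1 - c i.1)

/-- The `k`-th column of `A` restricted to the rows in `V = {j : y*_j > 0}` (realized inside
`ℝ^m` by zeroing out the coordinates outside `V`), as a vector of Euclidean space. -/
noncomputable def colV {m n : ℕ} (A : Matrix (Fin m) (Fin n) ℝ) (ys : Fin m → ℝ) (k : Fin n) :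
    EuclideanSpace ℝ (Fin m) :=
  WithLp.toLp 2 (fun j => if 0 < ys j then A j k else 0)

/-- `γ = min_{k ∈ U} dist(A_{V,k}, span {A_{V,k'} : k' ∈ U, k' ≠ k})`. -/
noncomputable def gammaLP {m n : ℕ} (A : Matrix (Fin m) (Fin n) ℝ) (xs : Fin n → ℝ)
    (ys : Fin m → ℝ) : ℝ :=
  ⨅ k : {k : Fin n // 0 < xs k},
    Metric.infDist (colV A ys k.1)
      (Submodule.span ℝ (colV A ys '' {k' | 0 < xs k' ∧ k' ≠ k.1}) :
        Set (EuclideanSpace ℝ (Fin m)))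

/-- Lemma 7.2 (`techAv`): for primal feasible `x`,
`c·(x* − x) ≥ α_D · ‖A_{V,:}(x* − x)‖`. -/
theorem gap_ge_alphaD_mul_norm {m n : ℕ} (A : Matrix (Fin m) (Fin n) ℝ) (b : Fin m → ℝ)
    (c : Fin n → ℝ) (xs : Fin n → ℝ) (ys : Fin m → ℝ)
    (hP : IsPrimalOptimal A b c xs) (hD : IsDualOptimal A b c ys)
    (hPu : ∀ x', IsPrimalOptimal A b c x' → x' = xs)
    (hDu : ∀ y', IsDualOptimal A b c y' → y' = ys)
    (hsd1 : c ⬝ᵥ xs = ys ⬝ᵥ A.mulVec xs) (hsd2 : ys ⬝ᵥ A.mulVec xs = ys ⬝ᵥ b)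
    (hV : ∀ j, 0 < ys j → A.mulVec xs j = b j)
    (hVz : ∀ j, ¬ 0 < ys j → ys j = 0)
    (x : Fin n → ℝ) (hx : IsPrimalFeasible A b x) :
    alphaD ys * Real.sqrt (∑ j, if 0 < ys j then (A.mulVec (xs - x) j) ^ 2 else 0) ≤
      c ⬝ᵥ (xs - x) := by
  classical
  set d : Fin m → ℝ := A.mulVec (xs - x) with hd
  have hdj : ∀ j, 0 < ys j → d j = b j - A.mulVec x j := by
    intro j hj
    simp [hd, Matrix.mulVec_sub, hV j hj]
  have hdnn : ∀ j, 0 < ys j → 0 ≤ d j := by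
    intro j hj; rw [hdj j hj]; exact sub_nonneg.2 (hx.1 j)
  have h1 : c ⬝ᵥ x ≤ ys ⬝ᵥ A.mulVec x := by
    rw [Matrix.dotProduct_mulVec]
    exact Finset.sum_le_sum fun i _ =>
      mul_le_mul_of_nonneg_right (hD.1.1 i) (hx.2 i)
  have hgap : ∑ j, (if 0 < ys j then ys j * d j else 0) ≤ c ⬝ᵥ (xs - x) := by
    have hc : c ⬝ᵥ (xs - x) = ys ⬝ᵥ b - c ⬝ᵥ x := by
      rw [dotProduct_sub, hsd1, hsd2]
    rw [hc]
    have h2 : ∑ j, (if 0 < ys j then ys j * d j else 0)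
        = ys ⬝ᵥ b - ys ⬝ᵥ A.mulVec x := by
      rw [← dotProduct_sub]
      simp only [dotProduct, Pi.sub_apply]
      refine Finset.sum_congr rfl fun j _ => ?_
      by_cases hj : 0 < ys j
      · rw [if_pos hj, hdj j hj]
      · rw [if_neg hj, hVz j hj]; ring
    rw [h2]
    exact sub_le_sub_left h1 _
  have hADle : ∀ j, 0 < ys j → alphaD ys ≤ ys j := by
    intro j hj
    rw [alphaD]
    exact ciInf_le (Set.Finite.bddBelow (Set.finite_range _)) (⟨j, hj⟩ : {j : Fin m // 0 < ys j})
  have hADnn : 0 ≤ alphaD ys := by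
    by_cases hne : Nonempty {j : Fin m // 0 < ys j}
    · exact le_ciInf fun j => j.2.le
    · haveI := not_nonempty_iff.mp hne
      rw [alphaD, Real.iInf_of_isEmpty]
  set S := ∑ j, (if 0 < ys j then d j else 0) with hS
  have hterm_nn : ∀ j : Fin m, 0 ≤ (if 0 < ys j then d j else 0) := by
    intro j; split_ifs with hj
    · exact hdnn j hj
    · exact le_refl 0
  have hSnn : 0 ≤ S := Finset.sum_nonneg fun j _ => hterm_nn j
  have hsq : ∑ j, (if 0 < ys j then d j ^ 2 else 0) ≤ S ^ 2 := by
    rw [sq, hS, Finset.sum_mul]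
    refine Finset.sum_le_sum fun j _ => ?_
    by_cases hj : 0 < ys j
    · simp only [if_pos hj]
      rw [sq]
      refine mul_le_mul_of_nonneg_left ?_ (hdnn j hj)
      calc d j = (if 0 < ys j then d j else 0) := by rw [if_pos hj]
        _ ≤ S := Finset.single_le_sum (fun i _ => hterm_nn i) (Finset.mem_univ j)
    · simp [hj]
  have hsqrt : Real.sqrt (∑ j, if 0 < ys j then (A.mulVec (xs - x) j) ^ 2 else 0) ≤ S := by
    have : (∑ j, if 0 < ys j then (A.mulVec (xs - x) j) ^ 2 else 0)
        = ∑ j, if 0 < ys j then d j ^ 2 else 0 := rfl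
    rw [this]
    calc Real.sqrt (∑ j, if 0 < ys j then d j ^ 2 else 0)
        ≤ Real.sqrt (S ^ 2) := Real.sqrt_le_sqrt hsq
      _ = S := Real.sqrt_sq hSnn
  calc alphaD ys * Real.sqrt (∑ j, if 0 < ys j then (A.mulVec (xs - x) j) ^ 2 else 0)
      ≤ alphaD ys * S := mul_le_mul_of_nonneg_left hsqrt hADnn
    _ = ∑ j, (if 0 < ys j then alphaD ys * d j else 0) := by
        rw [hS, Finset.mul_sum]
        exact Finset.sum_congr rfl fun j _ => by
          split_ifs with hj <;> simp
    _ ≤ ∑ j, (if 0 < ys j then ys j * d j else 0) := by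
        refine Finset.sum_le_sum fun j _ => ?_
        split_ifs with hj
        · exact mul_le_mul_of_nonneg_right (hADle j hj) (hdnn j hj)
        · exact le_refl 0
    _ ≤ c ⬝ᵥ (xs - x) := hgap
end

section
/- Let x be primal feasible (A x ≤ b, x ≥ 0) for a bounded linear program with unique primal and dual optimal solutions x*, y*, where strong duality c·x* = y*·b holds, y* is dual feasible (y* A ≥ c, y* ≥ 0), y* A_{:,i} = c_i for all i ∈ U, and β_D = min_{i ∉ U} (y* A_{:,i} − c_i) > 0. Then ‖x_{Ū}‖ ≤ c·(x* − x) / β_D, where x_{Ū} is the restriction of x to the coordinates outside U and ‖·‖ is the Euclidean norm. -/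
open MeasureTheory ProbabilityTheory Matrix
open scoped NNReal ENNReal

/-- Lemma 7.4 (`techUbar`): for primal feasible `x`,
`‖x_Ū‖ ≤ c·(x* − x) / β_D`. -/
theorem norm_outside_U_le_gap_div_betaD {m n : ℕ} (A : Matrix (Fin m) (Fin n) ℝ)
    (b : Fin m → ℝ) (c : Fin n → ℝ) (xs : Fin n → ℝ) (ys : Fin m → ℝ)
    (hP : IsPrimalOptimal A b c xs) (hD : IsDualOptimal A b c ys)
    (hPu : ∀ x', IsPrimalOptimal A b c x' → x' = xs)
    (hDu : ∀ y', IsDualOptimal A b c y' → y' = ys)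
    (hsd : c ⬝ᵥ xs = ys ⬝ᵥ b)
    (hU : ∀ i, 0 < xs i → Matrix.vecMul ys A i = c i)
    (hβ : 0 < betaD A c xs ys)
    (x : Fin n → ℝ) (hx : IsPrimalFeasible A b x) :
    Real.sqrt (∑ i, if 0 < xs i then 0 else x i ^ 2) ≤ c ⬝ᵥ (xs - x) / betaD A c xs ys := by
  classical
  obtain ⟨hAx, hx0⟩ := hx
  obtain ⟨⟨hdf, hy0⟩, _⟩ := hD
  set β := betaD A c xs ys with hβdef
  set g : Fin n → ℝ := fun i => if 0 < xs i then 0 else x i with hg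
  have hg0 : ∀ i, 0 ≤ g i := by
    intro i; simp only [hg]; split <;> [rfl; exact hx0 i]
  -- Step 1: sqrt of sum of squares ≤ sum
  have h1 : Real.sqrt (∑ i, if 0 < xs i then 0 else x i ^ 2) ≤ ∑ i, g i := by
    have heq : (∑ i, if 0 < xs i then 0 else x i ^ 2) = ∑ i, g i ^ 2 := by
      apply Finset.sum_congr rfl; intro i _
      simp only [hg]; split <;> simp
    rw [heq]
    have h2 : (∑ i, g i ^ 2) ≤ (∑ i, g i) ^ 2 :=
      Finset.sum_sq_le_sq_sum_of_nonneg (fun i _ => hg0 i)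
    calc Real.sqrt (∑ i, g i ^ 2) ≤ Real.sqrt ((∑ i, g i) ^ 2) := Real.sqrt_le_sqrt h2
      _ = ∑ i, g i := Real.sqrt_sq (Finset.sum_nonneg fun i _ => hg0 i)
  -- Step 2: β * ∑ g ≤ c ⬝ᵥ (xs - x)
  have h3 : β * (∑ i, g i) ≤ c ⬝ᵥ (xs - x) := by
    have hterm : ∀ i, β * g i ≤ (Matrix.vecMul ys A i - c i) * x i := by
      intro i
      by_cases hi : 0 < xs i
      · simp [hg, hi, hU i hi]
      · simp only [hg, if_neg hi]
        apply mul_le_mul_of_nonneg_right _ (hx0 i)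
        have hle : betaD A c xs ys ≤ Matrix.vecMul ys A i - c i :=
          ciInf_le (Set.Finite.bddBelow (Set.finite_range
            (fun j : {i : Fin n // ¬ 0 < xs i} => Matrix.vecMul ys A j.1 - c j.1))) ⟨i, hi⟩
        exact hle
    have hsum : β * (∑ i, g i) ≤ ∑ i, (Matrix.vecMul ys A i - c i) * x i := by
      rw [Finset.mul_sum]
      exact Finset.sum_le_sum fun i _ => hterm i
    have heq2 : (∑ i, (Matrix.vecMul ys A i - c i) * x i)
        = ys ⬝ᵥ A.mulVec x - c ⬝ᵥ x := by
      rw [Matrix.dotProduct_mulVec]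
      simp [dotProduct, sub_mul, Finset.sum_sub_distrib]
    have h4 : ys ⬝ᵥ A.mulVec x ≤ ys ⬝ᵥ b := by
      apply Finset.sum_le_sum
      intro j _
      exact mul_le_mul_of_nonneg_left (hAx j) (hy0 j)
    calc β * (∑ i, g i) ≤ ys ⬝ᵥ A.mulVec x - c ⬝ᵥ x := hsum.trans_eq heq2
      _ ≤ ys ⬝ᵥ b - c ⬝ᵥ x := by linarith
      _ = c ⬝ᵥ (xs - x) := by rw [← hsd, dotProduct_sub]
  have h5 : (∑ i, g i) ≤ c ⬝ᵥ (xs - x) / β := by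
    rw [le_div_iff₀ hβ, mul_comm]
    exact h3
  exact h1.trans h5
end

section
/- Consider a bounded feasible linear program max c·x subject to A x ≤ b, x ≥ 0 with unique primal and dual optimal solutions x*, y* satisfying strong duality c·x* = y*·A·x* = y*·b, with A_{V,:} x* = b_V, y*_j = 0 for j ∉ V, and y* A_{:,i} = c_i for i ∈ U. Let λ = min(α_P, α_D, β_P, β_D) and γ = min_{k ∈ U} dist(A_{V,k}, span{A_{V,k'} : k' ∈ U, k' ≠ k}). If x is primal feasible and c·(x* − x) < λ²γ / (2·max(1, √n·‖A‖)·(1 + ‖A‖)), then: x_i > λ/2 for every i ∈ U; x_i < λ/2 for every i ∉ U; b_j − A_{j,:} x < λ/2 for every j ∈ V; and b_j − A_{j,:} x > λ/2 for every j ∉ V. Consequently the n smallest values among {x_1,...,x_n} ∪ {b_j − A_{j,:} x : j = 1..m} are exactly those indexed by Ū and V. -/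
open MeasureTheory ProbabilityTheory Matrix
open scoped NNReal ENNReal

/-- The `L2 → L2` operator norm of a real matrix. -/
noncomputable def matOpNorm {m n : ℕ} (A : Matrix (Fin m) (Fin n) ℝ) : ℝ :=
  letI := Matrix.instL2OpNormedAddCommGroup (m := Fin m) (n := Fin n) (𝕜 := ℝ)
  ‖A‖

/-- The Euclidean norm of a vector. -/
noncomputable def euclNorm {k : ℕ} (v : Fin k → ℝ) : ℝ := Real.sqrt (∑ i, v i ^ 2)

lemma aux_euclNorm_le_of_sq_le {k : ℕ} (v w : Fin k → ℝ) (h : ∀ i, v i ^ 2 ≤ w i ^ 2) :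
    euclNorm v ≤ euclNorm w := Real.sqrt_le_sqrt (Finset.sum_le_sum fun i _ => h i)

lemma euclNorm_eq' {k : ℕ} (v : EuclideanSpace ℝ (Fin k)) : ‖v‖ = euclNorm v := by
  rw [EuclideanSpace.norm_eq]; unfold euclNorm; congr 1
  exact Finset.sum_congr rfl fun i _ => by rw [Real.norm_eq_abs, sq_abs]

lemma matOpNorm_nonneg' {m n : ℕ} (A : Matrix (Fin m) (Fin n) ℝ) : 0 ≤ matOpNorm A := by
  letI := Matrix.instL2OpNormedAddCommGroup (m := Fin m) (n := Fin n) (𝕜 := ℝ)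
  exact norm_nonneg A

lemma mulVec_norm_le' {m n : ℕ} (A : Matrix (Fin m) (Fin n) ℝ) (v : Fin n → ℝ) :
    euclNorm (A.mulVec v) ≤ matOpNorm A * euclNorm v := by
  letI := Matrix.instL2OpNormedAddCommGroup (m := Fin m) (n := Fin n) (𝕜 := ℝ)
  have h := Matrix.l2_opNorm_mulVec A ((EuclideanSpace.equiv (Fin n) ℝ).symm v)
  rw [euclNorm_eq'] at h
  rw [show ‖(EuclideanSpace.equiv (Fin n) ℝ).symm v‖ = euclNorm v from euclNorm_eq' _] at h
  exact h

lemma aux_abs_le_euclNorm {k : ℕ} (v : Fin k → ℝ) (i : Fin k) : |v i| ≤ euclNorm v := by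
  rw [euclNorm, ← Real.sqrt_sq_eq_abs]
  exact Real.sqrt_le_sqrt (Finset.single_le_sum (f := fun i => v i ^ 2)
    (fun j _ => sq_nonneg _) (Finset.mem_univ i))

lemma aux_euclNorm_le_sqrt_card {k : ℕ} (v : Fin k → ℝ) (C : ℝ) (hC : 0 ≤ C)
    (h : ∀ i, |v i| ≤ C) : euclNorm v ≤ Real.sqrt k * C := by
  rw [euclNorm, ← Real.sqrt_sq hC, ← Real.sqrt_mul (Nat.cast_nonneg k)]
  apply Real.sqrt_le_sqrt
  calc ∑ i, v i ^ 2 ≤ ∑ _i : Fin k, C ^ 2 := Finset.sum_le_sum fun i _ => by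
        nlinarith [h i, abs_nonneg (v i), sq_abs (v i)]
    _ = k * C ^ 2 := by simp [Finset.sum_const, Finset.card_univ]

lemma aux_euclNorm_le_of_nonneg {k : ℕ} (v : Fin k → ℝ) (C : ℝ) (hC : 0 ≤ C)
    (h0 : ∀ i, 0 ≤ v i) (h1 : ∀ i, v i ≤ C) (h2 : ∑ i, v i ≤ C) : euclNorm v ≤ C := by
  rw [euclNorm, ← Real.sqrt_sq hC]
  apply Real.sqrt_le_sqrt
  calc ∑ i, v i ^ 2 ≤ ∑ i, C * v i := Finset.sum_le_sum fun i _ => by nlinarith [h0 i, h1 i]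
    _ = C * ∑ i, v i := by rw [Finset.mul_sum]
    _ ≤ C * C := by nlinarith
    _ = C ^ 2 := (sq C).symm

lemma aux_smul_infDist_le {E : Type*} [NormedAddCommGroup E] [NormedSpace ℝ E]
    (v : E) (S : Submodule ℝ E) (r : ℝ) (w : E) (hw : w ∈ S) :
    |r| * Metric.infDist v (S : Set E) ≤ ‖r • v + w‖ := by
  rcases eq_or_ne r 0 with h | h
  · simp only [h, abs_zero, zero_mul]
    exact norm_nonneg _
  · have hmem : -(r⁻¹ • w) ∈ (S : Set E) := S.neg_mem (S.smul_mem _ hw)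
    have h1 : Metric.infDist v (S : Set E) ≤ dist v (-(r⁻¹ • w)) :=
      Metric.infDist_le_dist_of_mem hmem
    have h2 : dist v (-(r⁻¹ • w)) = ‖v + r⁻¹ • w‖ := by
      rw [dist_eq_norm, sub_neg_eq_add]
    have h3 : ‖r • v + w‖ = |r| * ‖v + r⁻¹ • w‖ := by
      rw [← Real.norm_eq_abs, ← norm_smul]
      congr 1
      rw [smul_add, smul_smul, mul_inv_cancel₀ h, one_smul]
    rw [h3]
    have := mul_le_mul_of_nonneg_left (h1.trans (le_of_eq h2)) (abs_nonneg r)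
    linarith

lemma aux_colV_norm_le {m n : ℕ} (A : Matrix (Fin m) (Fin n) ℝ) (ys : Fin m → ℝ) (k : Fin n) :
    ‖colV A ys k‖ ≤ matOpNorm A := by
  rw [euclNorm_eq']
  have hs : ∀ j, A.mulVec (Pi.single k 1) j = A j k := by
    intro j
    simp [Matrix.mulVec, dotProduct, Pi.single_apply, mul_ite]
  have h1 : euclNorm (fun j => colV A ys k j) ≤ euclNorm (A.mulVec (Pi.single k 1)) := by
    apply aux_euclNorm_le_of_sq_le
    intro j
    rw [hs j]
    unfold colV
    simp only [PiLp.toLp_apply]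
    split <;> simp [sq_nonneg]
  have h2 := mulVec_norm_le' A (Pi.single k 1)
  have h3 : euclNorm (Pi.single k 1 : Fin n → ℝ) = 1 := by
    unfold euclNorm
    rw [show (∑ i, (Pi.single k 1 : Fin n → ℝ) i ^ 2) = 1 by
      rw [Finset.sum_eq_single k]
      · simp
      · intro b _ hb; simp [Pi.single_apply, hb]
      · intro h; exact absurd (Finset.mem_univ k) h]
    exact Real.sqrt_one
  calc euclNorm (colV A ys k) ≤ euclNorm (A.mulVec (Pi.single k 1)) := h1
    _ ≤ matOpNorm A * euclNorm (Pi.single k 1 : Fin n → ℝ) := h2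
    _ = matOpNorm A := by rw [h3, mul_one]

set_option maxHeartbeats 2000000 in
/-- Lemma 6.1 (`canRound`): if `c·(x* − x) < λ²γ / (2 max(1, √n ‖A‖)(1 + ‖A‖))` for a primal
feasible `x`, then the entries of `x` indexed by `U` are `> λ/2`, those outside `U` are
`< λ/2`, the slacks indexed by `V` are `< λ/2` and those outside `V` are `> λ/2`; consequently
the `n` smallest of the `m + n` values `{x_i} ∪ {b_j − A_{j,:} x}` are exactly those indexed
by `Ū` and `V`. -/
theorem termination_succeeds {m n : ℕ} (A : Matrix (Fin m) (Fin n) ℝ)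
    (b : Fin m → ℝ) (c : Fin n → ℝ) (xs : Fin n → ℝ) (ys : Fin m → ℝ)
    (hP : IsPrimalOptimal A b c xs) (hD : IsDualOptimal A b c ys)
    (hPu : ∀ x', IsPrimalOptimal A b c x' → x' = xs)
    (hDu : ∀ y', IsDualOptimal A b c y' → y' = ys)
    (hsd1 : c ⬝ᵥ xs = ys ⬝ᵥ A.mulVec xs) (hsd2 : ys ⬝ᵥ A.mulVec xs = ys ⬝ᵥ b)
    (hV : ∀ j, 0 < ys j → A.mulVec xs j = b j)
    (hVz : ∀ j, ¬ 0 < ys j → ys j = 0)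
    (hU : ∀ i, 0 < xs i → Matrix.vecMul ys A i = c i)
    (lam : ℝ)
    (hlam : lam = min (min (alphaP xs) (alphaD ys)) (min (betaP A b xs ys) (betaD A c xs ys)))
    (γ : ℝ) (hγ : γ = gammaLP A xs ys)
    (x : Fin n → ℝ) (hx : IsPrimalFeasible A b x)
    (hgap : c ⬝ᵥ xs - c ⬝ᵥ x <
      lam ^ 2 * γ / (2 * max 1 (Real.sqrt n * matOpNorm A) * (1 + matOpNorm A))) :
    (∀ i, 0 < xs i → lam / 2 < x i) ∧
    (∀ i, ¬ 0 < xs i → x i < lam / 2) ∧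
    (∀ j, 0 < ys j → b j - A.mulVec x j < lam / 2) ∧
    (∀ j, ¬ 0 < ys j → lam / 2 < b j - A.mulVec x j) ∧
    ((∀ i, ¬ 0 < xs i → ∀ i', 0 < xs i' → x i < x i') ∧
      (∀ i, ¬ 0 < xs i → ∀ j, ¬ 0 < ys j → x i < b j - A.mulVec x j) ∧
      (∀ j, 0 < ys j → ∀ i', 0 < xs i' → b j - A.mulVec x j < x i') ∧
      (∀ j, 0 < ys j → ∀ j', ¬ 0 < ys j' → b j - A.mulVec x j < b j' - A.mulVec x j')) := by
  classical
  obtain ⟨⟨hxsF, hxs0⟩, hxsOpt⟩ := hP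
  obtain ⟨⟨hysF, hys0⟩, -⟩ := hD
  obtain ⟨hxF, hx0⟩ := hx
  set K := matOpNorm A with hKdef
  have hK0 : 0 ≤ K := matOpNorm_nonneg' A
  set M := max 1 (Real.sqrt n * K) with hMdef
  have hM1 : (1:ℝ) ≤ M := le_max_left _ _
  have hMK : Real.sqrt n * K ≤ M := le_max_right _ _
  have hDen : (0:ℝ) < 2 * M * (1 + K) := by nlinarith
  set ε := c ⬝ᵥ xs - c ⬝ᵥ x with hεdef
  have hε0 : 0 ≤ ε := sub_nonneg.2 (hxsOpt x ⟨hxF, hx0⟩)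
  have hgap' : ε * (2 * M * (1 + K)) < lam ^ 2 * γ := (lt_div_iff₀ hDen).1 hgap
  have hlam_xs : ∀ i, 0 < xs i → lam ≤ xs i := by
    intro i hi
    calc lam ≤ alphaP xs := by rw [hlam]; exact (min_le_left _ _).trans (min_le_left _ _)
      _ ≤ xs i := by unfold alphaP; exact ciInf_le (Set.Finite.bddBelow (Set.finite_range _)) (⟨i, hi⟩ : {i : Fin n // 0 < xs i})
  have hlam_ys : ∀ j, 0 < ys j → lam ≤ ys j := by
    intro j hj
    calc lam ≤ alphaD ys := by rw [hlam]; exact (min_le_left _ _).trans (min_le_right _ _)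
      _ ≤ ys j := by unfold alphaD; exact ciInf_le (Set.Finite.bddBelow (Set.finite_range _)) (⟨j, hj⟩ : {j : Fin m // 0 < ys j})
  have hlam_slack : ∀ j, ¬ 0 < ys j → lam ≤ b j - A.mulVec xs j := by
    intro j hj
    calc lam ≤ betaP A b xs ys := by rw [hlam]; exact (min_le_right _ _).trans (min_le_left _ _)
      _ ≤ _ := by unfold betaP; exact ciInf_le (Set.Finite.bddBelow (Set.finite_range _)) (⟨j, hj⟩ : {j : Fin m // ¬ 0 < ys j})
  have hlam_red : ∀ i, ¬ 0 < xs i → lam ≤ Matrix.vecMul ys A i - c i := by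
    intro i hi
    calc lam ≤ betaD A c xs ys := by rw [hlam]; exact (min_le_right _ _).trans (min_le_right _ _)
      _ ≤ _ := by unfold betaD; exact ciInf_le (Set.Finite.bddBelow (Set.finite_range _)) (⟨i, hi⟩ : {i : Fin n // ¬ 0 < xs i})
  have hlam0 : 0 ≤ lam := by
    rw [hlam]
    unfold alphaP alphaD betaP betaD
    refine le_min (le_min ?_ ?_) (le_min ?_ ?_)
    · exact Real.iInf_nonneg fun i => (i.2).le
    · exact Real.iInf_nonneg fun j => (j.2).le
    · exact Real.iInf_nonneg fun j => sub_nonneg.2 (hxsF j.1)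
    · exact Real.iInf_nonneg fun i => sub_nonneg.2 (hysF i.1)
  have hγ0 : 0 ≤ γ := by
    rw [hγ]; unfold gammaLP; exact Real.iInf_nonneg fun k => Metric.infDist_nonneg
  have hnum : 0 < lam ^ 2 * γ := lt_of_le_of_lt (mul_nonneg hε0 hDen.le) hgap'
  have hγpos : 0 < γ := by nlinarith [sq_nonneg lam]
  have hlampos : 0 < lam := by
    rcases hlam0.lt_or_eq with h | h
    · exact h
    · exfalso; rw [← h] at hnum; simp at hnum
  have hUne : ∃ k, 0 < xs k := by
    by_contra hc
    push_neg at hc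
    haveI : IsEmpty {k : Fin n // 0 < xs k} := ⟨fun k => (hc k.1).not_gt k.2⟩
    rw [hγ] at hγpos
    unfold gammaLP at hγpos
    rw [Real.iInf_of_isEmpty] at hγpos
    exact lt_irrefl _ hγpos
  obtain ⟨k0, hk0⟩ := hUne
  have hγ_le : ∀ k, 0 < xs k → γ ≤ Metric.infDist (colV A ys k)
      (Submodule.span ℝ (colV A ys '' {k' | 0 < xs k' ∧ k' ≠ k}) :
        Set (EuclideanSpace ℝ (Fin m))) := by
    intro k hk
    rw [hγ]
    unfold gammaLP
    exact ciInf_le (Set.Finite.bddBelow (Set.finite_range _)) (⟨k, hk⟩ : {k : Fin n // 0 < xs k})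
  have hγK : γ ≤ K := by
    refine (hγ_le k0 hk0).trans ?_
    refine (Metric.infDist_le_dist_of_mem (Submodule.zero_mem _)).trans ?_
    rw [dist_zero_right]
    exact aux_colV_norm_le A ys k0
  have hKpos : 0 < K := lt_of_lt_of_le hγpos hγK
  have hdot : ys ⬝ᵥ A.mulVec x = Matrix.vecMul ys A ⬝ᵥ x := Matrix.dotProduct_mulVec ys A x
  have hgapdec : ε = (∑ j, ys j * (b j - A.mulVec x j))
      + (∑ i, (Matrix.vecMul ys A i - c i) * x i) := by
    have e1 : ∑ j, ys j * (b j - A.mulVec x j) = ys ⬝ᵥ b - ys ⬝ᵥ A.mulVec x := by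
      simp [dotProduct, mul_sub, Finset.sum_sub_distrib]
    have e2 : ∑ i, (Matrix.vecMul ys A i - c i) * x i
        = Matrix.vecMul ys A ⬝ᵥ x - c ⬝ᵥ x := by
      simp [dotProduct, sub_mul, Finset.sum_sub_distrib]
    rw [e1, e2, ← hdot, hεdef, hsd1, hsd2]
    ring
  have hterm1 : ∀ j, 0 ≤ ys j * (b j - A.mulVec x j) :=
    fun j => mul_nonneg (hys0 j) (sub_nonneg.2 (hxF j))
  have hterm2 : ∀ i, 0 ≤ (Matrix.vecMul ys A i - c i) * x i :=
    fun i => mul_nonneg (sub_nonneg.2 (hysF i)) (hx0 i)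
  have hS1 : ∑ j, ys j * (b j - A.mulVec x j) ≤ ε := by
    have := Finset.sum_nonneg (fun i (_ : i ∈ Finset.univ) => hterm2 i)
    linarith
  have hS2 : ∑ i, (Matrix.vecMul ys A i - c i) * x i ≤ ε := by
    have := Finset.sum_nonneg (fun j (_ : j ∈ Finset.univ) => hterm1 j)
    linarith
  have hj_le : ∀ j, ys j * (b j - A.mulVec x j) ≤ ε := fun j =>
    (Finset.single_le_sum (fun j _ => hterm1 j) (Finset.mem_univ j)).trans hS1
  have hi_le : ∀ i, (Matrix.vecMul ys A i - c i) * x i ≤ ε := fun i =>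
    (Finset.single_le_sum (fun i _ => hterm2 i) (Finset.mem_univ i)).trans hS2
  set Q := ε / lam with hQdef
  have hQ0 : 0 ≤ Q := div_nonneg hε0 hlampos.le
  have hQeq : lam * Q = ε := by
    rw [hQdef]; field_simp
  have hxQ : ∀ i, ¬ 0 < xs i → x i ≤ Q := by
    intro i hi
    have h1 : lam * x i ≤ (Matrix.vecMul ys A i - c i) * x i :=
      mul_le_mul_of_nonneg_right (hlam_red i hi) (hx0 i)
    have h2 := h1.trans (hi_le i)
    rw [← hQeq] at h2
    exact le_of_mul_le_mul_left h2 hlampos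
  have hslQ : ∀ j, 0 < ys j → b j - A.mulVec x j ≤ Q := by
    intro j hj
    have h1 : lam * (b j - A.mulVec x j) ≤ ys j * (b j - A.mulVec x j) :=
      mul_le_mul_of_nonneg_right (hlam_ys j hj) (sub_nonneg.2 (hxF j))
    have h2 := h1.trans (hj_le j)
    rw [← hQeq] at h2
    exact le_of_mul_le_mul_left h2 hlampos
  have hQhalf : Q < lam / 2 := by
    have h1 : ε * (2 * M) * (1 + K) < lam ^ 2 * (1 + K) := by nlinarith [sq_nonneg lam]
    have h2 : ε * (2 * M) < lam ^ 2 :=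
      lt_of_mul_lt_mul_right h1 (by linarith : (0:ℝ) ≤ 1 + K)
    have h4 : 2 * ε < lam ^ 2 := by nlinarith
    rw [hQdef, div_lt_div_iff₀ hlampos two_pos]
    nlinarith [h4]
  have conc2 : ∀ i, ¬ 0 < xs i → x i < lam / 2 := fun i hi => (hxQ i hi).trans_lt hQhalf
  have conc3 : ∀ j, 0 < ys j → b j - A.mulVec x j < lam / 2 :=
    fun j hj => (hslQ j hj).trans_lt hQhalf
  -- the difference vector
  set d : Fin n → ℝ := fun i => xs i - x i with hddef
  have hxsz : ∀ i, ¬ 0 < xs i → xs i = 0 := fun i hi => le_antisymm (not_lt.1 hi) (hxs0 i)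
  set wv : EuclideanSpace ℝ (Fin m) := WithLp.toLp 2 (fun j => if 0 < ys j then b j - A.mulVec x j else 0)
    with hwvdef
  have hwv0 : ∀ j, 0 ≤ wv j := by
    intro j; rw [hwvdef]; simp only [PiLp.toLp_apply]; split
    · exact sub_nonneg.2 (hxF j)
    · exact le_refl 0
  have hwv_le : ∀ j, wv j ≤ Q := by
    intro j; rw [hwvdef]; simp only [PiLp.toLp_apply]; split
    · exact hslQ j ‹_›
    · exact hQ0
  have hwv_sum : ∑ j, wv j ≤ Q := by
    have h1 : lam * ∑ j, wv j ≤ ∑ j, ys j * (b j - A.mulVec x j) := by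
      rw [Finset.mul_sum]
      apply Finset.sum_le_sum
      intro j _
      rw [hwvdef]; simp only [PiLp.toLp_apply]; split
      · exact mul_le_mul_of_nonneg_right (hlam_ys j ‹_›) (sub_nonneg.2 (hxF j))
      · simpa using hterm1 j
    have h2 : lam * ∑ j, wv j ≤ lam * Q := by rw [hQeq]; exact h1.trans hS1
    exact le_of_mul_le_mul_left h2 hlampos
  have hwv_norm : ‖wv‖ ≤ Q := by
    rw [euclNorm_eq']
    exact aux_euclNorm_le_of_nonneg _ Q hQ0 hwv0 hwv_le hwv_sum
  have hxcsum : ∑ k ∈ Finset.univ.filter (fun k => ¬ 0 < xs k), x k ≤ Q := by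
    have h1 : lam * ∑ k ∈ Finset.univ.filter (fun k => ¬ 0 < xs k), x k
        ≤ ∑ k ∈ Finset.univ.filter (fun k => ¬ 0 < xs k), (Matrix.vecMul ys A k - c k) * x k := by
      rw [Finset.mul_sum]
      apply Finset.sum_le_sum
      intro k hk
      exact mul_le_mul_of_nonneg_right (hlam_red k (Finset.mem_filter.1 hk).2) (hx0 k)
    have h1' : ∑ k ∈ Finset.univ.filter (fun k => ¬ 0 < xs k), (Matrix.vecMul ys A k - c k) * x k
        ≤ ∑ k, (Matrix.vecMul ys A k - c k) * x k :=
      Finset.sum_le_sum_of_subset_of_nonneg (Finset.filter_subset _ _) (fun k _ _ => hterm2 k)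
    have h2 : lam * ∑ k ∈ Finset.univ.filter (fun k => ¬ 0 < xs k), x k ≤ lam * Q := by
      rw [hQeq]; exact h1.trans (h1'.trans hS2)
    exact le_of_mul_le_mul_left h2 hlampos
  set wU : EuclideanSpace ℝ (Fin m) :=
    ∑ k ∈ Finset.univ.filter (fun k => 0 < xs k), d k • colV A ys k with hwUdef
  set wC : EuclideanSpace ℝ (Fin m) :=
    ∑ k ∈ Finset.univ.filter (fun k => ¬ 0 < xs k), d k • colV A ys k with hwCdef
  have hsplit : wv = wU + wC := by
    rw [hwUdef, hwCdef, Finset.sum_filter_add_sum_filter_not]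
    ext j
    rw [show (∑ k, d k • colV A ys k) j = ∑ k, (d k • colV A ys k) j by
      rw [WithLp.ofLp_sum, Finset.sum_apply]]
    simp only [hwvdef, hddef, colV, PiLp.toLp_apply, PiLp.smul_apply, smul_eq_mul, mul_ite, mul_zero]
    by_cases hj : 0 < ys j
    · simp only [hj, if_true]
      rw [← hV j hj]
      simp only [Matrix.mulVec, dotProduct]
      rw [← Finset.sum_sub_distrib]
      exact Finset.sum_congr rfl fun k _ => by ring
    · simp [hj]
  have hwC_norm : ‖wC‖ ≤ K * Q := by
    rw [hwCdef]
    refine (norm_sum_le _ _).trans ?_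
    have hb : ∀ k ∈ Finset.univ.filter (fun k => ¬ 0 < xs k),
        ‖d k • colV A ys k‖ ≤ K * x k := by
      intro k hk
      have hk2 := (Finset.mem_filter.1 hk).2
      rw [norm_smul, Real.norm_eq_abs]
      have habs : |d k| = x k := by
        rw [hddef]; dsimp only; rw [hxsz k hk2, zero_sub, abs_neg, abs_of_nonneg (hx0 k)]
      rw [habs, mul_comm (x k)]
      exact mul_le_mul_of_nonneg_right (aux_colV_norm_le A ys k) (hx0 k)
    calc ∑ k ∈ Finset.univ.filter (fun k => ¬ 0 < xs k), ‖d k • colV A ys k‖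
        ≤ ∑ k ∈ Finset.univ.filter (fun k => ¬ 0 < xs k), K * x k := Finset.sum_le_sum hb
      _ = K * ∑ k ∈ Finset.univ.filter (fun k => ¬ 0 < xs k), x k := by rw [Finset.mul_sum]
      _ ≤ K * Q := mul_le_mul_of_nonneg_left hxcsum hK0
  have hwU_norm : ‖wU‖ ≤ (1 + K) * Q := by
    have he : wU = wv - wC := by rw [hsplit]; abel
    rw [he]
    refine (norm_sub_le _ _).trans ?_
    nlinarith [hwv_norm, hwC_norm]
  have hdU : ∀ k, 0 < xs k → |d k| * γ ≤ (1 + K) * Q := by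
    intro k hk
    have hsub : wU = d k • colV A ys k +
        ∑ k' ∈ (Finset.univ.filter (fun k' => 0 < xs k')).erase k, d k' • colV A ys k' := by
      rw [hwUdef]
      exact (Finset.add_sum_erase _ (fun k' => d k' • colV A ys k')
        (Finset.mem_filter.2 ⟨Finset.mem_univ k, hk⟩)).symm
    have hmem : (∑ k' ∈ (Finset.univ.filter (fun k' => 0 < xs k')).erase k,
        d k' • colV A ys k') ∈
        Submodule.span ℝ (colV A ys '' {k' | 0 < xs k' ∧ k' ≠ k}) := by
      apply Submodule.sum_mem
      intro k' hk'
      have hk'2 := Finset.mem_erase.1 hk'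
      exact Submodule.smul_mem _ _ (Submodule.subset_span
        ⟨k', ⟨(Finset.mem_filter.1 hk'2.2).2, hk'2.1⟩, rfl⟩)
    have h1 := aux_smul_infDist_le (colV A ys k) _ (d k) _ hmem
    rw [← hsub] at h1
    calc |d k| * γ ≤ |d k| * Metric.infDist (colV A ys k)
          (Submodule.span ℝ (colV A ys '' {k' | 0 < xs k' ∧ k' ≠ k}) :
            Set (EuclideanSpace ℝ (Fin m))) :=
        mul_le_mul_of_nonneg_left (hγ_le k hk) (abs_nonneg _)
      _ ≤ ‖wU‖ := h1
      _ ≤ (1 + K) * Q := hwU_norm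
  have conc1 : ∀ i, 0 < xs i → lam / 2 < x i := by
    intro i hi
    have h1 := hdU i hi
    have h2 : d i ≤ |d i| := le_abs_self _
    have hxsil := hlam_xs i hi
    have h3 : |d i| < lam / 2 := by
      by_contra hcon
      push_neg at hcon
      have e1 : lam / 2 * γ ≤ (1 + K) * Q :=
        le_trans (mul_le_mul_of_nonneg_right hcon hγpos.le) h1
      have e2 : lam * (lam / 2 * γ) ≤ lam * ((1 + K) * Q) :=
        mul_le_mul_of_nonneg_left e1 hlampos.le
      have e3 : lam * ((1 + K) * Q) = (1 + K) * ε := by rw [← hQeq]; ring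
      have e4 : 0 ≤ ε * (M - 1) * (1 + K) :=
        mul_nonneg (mul_nonneg hε0 (by linarith)) (by linarith)
      nlinarith [e2, e3, e4, hgap']
    have hdi : d i = xs i - x i := by rw [hddef]
    linarith
  have hdmax : ∀ i, |d i| * γ ≤ (1 + K) * Q := by
    intro i
    by_cases hi : 0 < xs i
    · exact hdU i hi
    · have hdi : d i = 0 - x i := by rw [hddef]; dsimp only; rw [hxsz i hi]
      have habs : |d i| = x i := by
        rw [hdi, zero_sub, abs_neg, abs_of_nonneg (hx0 i)]
      calc |d i| * γ = x i * γ := by rw [habs]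
        _ ≤ Q * (1 + K) := mul_le_mul (hxQ i hi) (by linarith) hγ0 hQ0
        _ = (1 + K) * Q := mul_comm _ _
  have hd_eucl : euclNorm d ≤ Real.sqrt n * ((1 + K) * Q / γ) := by
    apply aux_euclNorm_le_sqrt_card
    · positivity
    · intro i
      rw [le_div_iff₀ hγpos]
      exact hdmax i
  have hAd : ∀ j, |A.mulVec d j| ≤ K * (Real.sqrt n * ((1 + K) * Q / γ)) := by
    intro j
    refine (aux_abs_le_euclNorm _ j).trans ?_
    refine (mulVec_norm_le' A d).trans ?_
    exact mul_le_mul_of_nonneg_left hd_eucl hK0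
  have hAdhalf : ∀ j, |A.mulVec d j| < lam / 2 := by
    intro j
    refine lt_of_le_of_lt (hAd j) ?_
    have hsq : 0 ≤ Real.sqrt n := Real.sqrt_nonneg _
    rw [show K * (Real.sqrt n * ((1 + K) * Q / γ))
        = K * Real.sqrt n * (1 + K) * Q / γ by ring]
    rw [div_lt_div_iff₀ hγpos two_pos]
    have e1 : lam * (K * Real.sqrt n * (1 + K) * Q * 2)
        = 2 * (Real.sqrt n * K) * (1 + K) * ε := by rw [← hQeq]; ring
    have e2 : 2 * (Real.sqrt n * K) * (1 + K) * ε ≤ 2 * M * (1 + K) * ε := by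
      have e2' : 0 ≤ (M - Real.sqrt n * K) * (1 + K) * ε :=
        mul_nonneg (mul_nonneg (sub_nonneg.2 hMK) (by linarith)) hε0
      nlinarith [e2']
    have e4 : lam * (K * Real.sqrt n * (1 + K) * Q * 2) < lam * (lam * γ) := by
      nlinarith [e1, e2, hgap']
    exact lt_of_mul_lt_mul_left e4 hlampos.le
  have conc4 : ∀ j, ¬ 0 < ys j → lam / 2 < b j - A.mulVec x j := by
    intro j hj
    have h1 := hlam_slack j hj
    have h2 : A.mulVec d j = A.mulVec xs j - A.mulVec x j := by
      rw [hddef]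
      simp only [Matrix.mulVec, dotProduct, mul_sub]
      rw [← Finset.sum_sub_distrib]
    have h3 := (abs_lt.1 (hAdhalf j)).1
    linarith
  exact ⟨conc1, conc2, conc3, conc4,
    fun i hi i' hi' => (conc2 i hi).trans (conc1 i' hi'),
    fun i hi j hj => (conc2 i hi).trans (conc4 j hj),
    fun j hj i' hi' => (conc3 j hj).trans (conc1 i' hi'),
    fun j hj j' hj' => (conc3 j hj).trans (conc4 j' hj')⟩
end

section
/- Let x be a non-negative real random variable and suppose there exist constants α > 0 and k > 0 with log(α)/k ≥ 1 such that P(x ≤ ε) ≤ α ε^k for every ε > 0. Then E[max(1, log(1/x))] ≤ (1 + log α)/k. -/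
open MeasureTheory ProbabilityTheory Matrix
open scoped NNReal ENNReal

/-- Lemma 6.7: if `P(x ≤ ε) ≤ α ε^k` for all `ε > 0`, with `log α / k ≥ 1`, then
`E[max (1, log (1/x))] ≤ (1 + log α) / k` (with `log (1/0)` interpreted as `+∞`). -/
theorem expectation_log_inv_le {Ω : Type*} [MeasurableSpace Ω] (P : Measure Ω)
    [IsProbabilityMeasure P] (x : Ω → ℝ) (hx : ∀ ω, 0 ≤ x ω)
    (α k : ℝ) (hα : 0 < α) (hk : 0 < k) (h1 : 1 ≤ Real.log α / k)
    (hP : ∀ ε : ℝ, 0 < ε → P {ω | x ω ≤ ε} ≤ ENNReal.ofReal (α * ε ^ k)) :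
    ∫⁻ ω, (if x ω = 0 then (⊤ : ℝ≥0∞)
        else ENNReal.ofReal (max 1 (Real.log (1 / x ω)))) ∂P ≤
      ENNReal.ofReal ((1 + Real.log α) / k) := by
  set c : ℝ := Real.log α / k with hc
  have hc1 : 1 ≤ c := h1
  have hc0 : 0 ≤ c := zero_le_one.trans hc1
  have hkc : k * c = Real.log α := by
    rw [hc]; field_simp
  -- Main per-δ bound
  have key : ∀ δ : ℝ, 0 < δ →
      (∫⁻ ω, (if x ω = 0 then (⊤ : ℝ≥0∞)
          else ENNReal.ofReal (max 1 (Real.log (1 / x ω)))) ∂P)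
        ≤ ENNReal.ofReal c + ENNReal.ofReal (δ / (1 - Real.exp (-(k * δ)))) := by
    intro δ hδ
    set ε : ℕ → ℝ := fun n => Real.exp (-(c + n * δ)) with hε
    have hεpos : ∀ n : ℕ, 0 < ε n := fun n => Real.exp_pos _
    set g : ℕ → Set Ω := fun n => toMeasurable P {ω | x ω ≤ ε n} with hg
    have hgm : ∀ n, MeasurableSet (g n) := fun n => measurableSet_toMeasurable _ _
    set r : ℝ := Real.exp (-(k * δ)) with hr
    have hr0 : 0 < r := Real.exp_pos _
    have hr1 : r < 1 := Real.exp_lt_one_iff.mpr (by nlinarith)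
    have hPg : ∀ n : ℕ, P (g n) ≤ ENNReal.ofReal (r ^ n) := by
      intro n
      have h2 : P (g n) = P {ω | x ω ≤ ε n} := measure_toMeasurable _
      rw [h2]
      refine (hP (ε n) (hεpos n)).trans (le_of_eq ?_)
      congr 1
      have hpow : ε n ^ k = Real.exp ((-(c + n * δ)) * k) := by
        rw [hε, Real.rpow_def_of_pos (Real.exp_pos _), Real.log_exp]
      rw [hpow]
      have : (-(c + (n : ℝ) * δ)) * k = -(k * c) + (n : ℝ) * (-(k * δ)) := by ring
      rw [this, Real.exp_add, Real.exp_nat_mul, ← mul_assoc, hkc, Real.exp_neg,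
        Real.exp_log hα, mul_inv_cancel₀ (ne_of_gt hα), one_mul]
    -- pointwise bound
    have hpt : ∀ ω, (if x ω = 0 then (⊤ : ℝ≥0∞)
        else ENNReal.ofReal (max 1 (Real.log (1 / x ω))))
          ≤ ENNReal.ofReal c + ∑' n : ℕ, (g n).indicator (fun _ => ENNReal.ofReal δ) ω := by
      intro ω
      by_cases h0 : x ω = 0
      · rw [if_pos h0]
        have hmem : ∀ n, ω ∈ g n := fun n =>
          subset_toMeasurable _ _ (by simp [h0, (hεpos n).le])
        have htop : ∑' n : ℕ, (g n).indicator (fun _ => ENNReal.ofReal δ) ω = ⊤ := by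
          rw [tsum_congr (fun n => Set.indicator_of_mem (hmem n) _)]
          exact ENNReal.tsum_const_eq_top_of_ne_zero
            (by simp [ENNReal.ofReal_eq_zero, not_le, hδ])
        rw [htop]
        simp
      · rw [if_neg h0]
        have hx0 : 0 < x ω := (hx ω).lt_of_ne (Ne.symm h0)
        set m : ℝ := max 1 (Real.log (1 / x ω)) with hm
        by_cases hmc : m ≤ c
        · exact le_add_right (ENNReal.ofReal_le_ofReal hmc)
        push_neg at hmc
        have hlog : Real.log (1 / x ω) = m := by
          rcases max_cases 1 (Real.log (1 / x ω)) with ⟨h, h'⟩ | ⟨h, h'⟩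
          · exfalso; rw [hm] at hmc; rw [h] at hmc; linarith
          · rw [hm, h]
        set N : ℕ := Nat.floor ((m - c) / δ) with hN
        have hmemn : ∀ n ∈ Finset.range (N + 1), ω ∈ g n := by
          intro n hn
          apply subset_toMeasurable
          have hn' : (n : ℝ) ≤ (m - c) / δ := by
            have h3 : n ≤ N := Nat.lt_succ_iff.mp (Finset.mem_range.mp hn)
            have h4 : (n : ℝ) ≤ (N : ℝ) := Nat.cast_le.mpr h3
            exact h4.trans (Nat.floor_le (div_nonneg (by linarith) hδ.le))
          have h5 : c + (n : ℝ) * δ ≤ m := by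
            have := (div_le_div_iff_of_pos_right hδ).mpr hn'
            have h6 : (n : ℝ) * δ ≤ m - c := by
              calc (n : ℝ) * δ ≤ ((m - c) / δ) * δ := by nlinarith
                _ = m - c := by field_simp
            linarith
          have h7 : c + (n : ℝ) * δ ≤ Real.log (1 / x ω) := by rw [hlog]; exact h5
          show x ω ≤ ε n
          have h8 : Real.log (x ω) ≤ -(c + (n : ℝ) * δ) := by
            rw [one_div, Real.log_inv] at h7; linarith
          calc x ω = Real.exp (Real.log (x ω)) := (Real.exp_log hx0).symm
            _ ≤ ε n := Real.exp_le_exp.mpr h8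
        have hsum : ENNReal.ofReal (m - c)
            ≤ ∑' n : ℕ, (g n).indicator (fun _ => ENNReal.ofReal δ) ω := by
          have hstep : ENNReal.ofReal (m - c) ≤ ENNReal.ofReal (((N : ℝ) + 1) * δ) := by
            apply ENNReal.ofReal_le_ofReal
            have h9 : (m - c) / δ < (N : ℝ) + 1 := Nat.lt_floor_add_one _
            calc m - c = ((m - c) / δ) * δ := by field_simp
              _ ≤ ((N : ℝ) + 1) * δ := by nlinarith
          refine hstep.trans ?_
          have h10 : ENNReal.ofReal (((N : ℝ) + 1) * δ)
              = ∑ n ∈ Finset.range (N + 1), (g n).indicator (fun _ => ENNReal.ofReal δ) ω := by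
            rw [Finset.sum_congr rfl (fun n hn => Set.indicator_of_mem (hmemn n hn) _)]
            rw [Finset.sum_const, Finset.card_range, ENNReal.ofReal_mul (by positivity),
              nsmul_eq_mul]
            congr 1
            rw [← ENNReal.ofReal_natCast (N + 1)]
            push_cast
            ring_nf
          rw [h10]
          exact ENNReal.sum_le_tsum _
        calc ENNReal.ofReal m = ENNReal.ofReal (c + (m - c)) := by ring_nf
          _ = ENNReal.ofReal c + ENNReal.ofReal (m - c) :=
              ENNReal.ofReal_add hc0 (by linarith)
          _ ≤ _ := add_le_add_right hsum _
    calc (∫⁻ ω, (if x ω = 0 then (⊤ : ℝ≥0∞)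
          else ENNReal.ofReal (max 1 (Real.log (1 / x ω)))) ∂P)
        ≤ ∫⁻ ω, (ENNReal.ofReal c
            + ∑' n : ℕ, (g n).indicator (fun _ => ENNReal.ofReal δ) ω) ∂P :=
          lintegral_mono hpt
      _ = ENNReal.ofReal c + ∑' n : ℕ, ENNReal.ofReal δ * P (g n) := by
          rw [lintegral_add_left measurable_const, lintegral_const, measure_univ, mul_one,
            lintegral_tsum (fun n => (measurable_const.indicator (hgm n)).aemeasurable)]
          congr 1
          exact tsum_congr fun n => lintegral_indicator_const (hgm n) _
      _ ≤ ENNReal.ofReal c + ∑' n : ℕ, ENNReal.ofReal δ * ENNReal.ofReal (r ^ n) :=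
          add_le_add_right (ENNReal.tsum_le_tsum fun n => mul_le_mul_right (hPg n) _) _
      _ = ENNReal.ofReal c + ENNReal.ofReal (δ / (1 - r)) := by
          congr 1
          rw [ENNReal.tsum_mul_left]
          rw [tsum_congr (fun n => ENNReal.ofReal_pow hr0.le n), ENNReal.tsum_geometric]
          rw [div_eq_mul_inv, ENNReal.ofReal_mul hδ.le]
          congr 1
          rw [ENNReal.ofReal_inv_of_pos (by linarith)]
          congr 1
          rw [ENNReal.ofReal_sub _ hr0.le, ENNReal.ofReal_one]
  -- Limit argument
  have hslope : Filter.Tendsto (fun δ : ℝ => δ / (1 - Real.exp (-(k * δ))))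
      (nhdsWithin 0 {(0:ℝ)}ᶜ) (nhds k⁻¹) := by
    have hder : HasDerivAt (fun t : ℝ => 1 - Real.exp (-(k * t))) k 0 := by
      have h1 : HasDerivAt (fun t : ℝ => -(k * t)) (-k) 0 := by
        exact (by simpa using ((hasDerivAt_id (0:ℝ)).const_mul k).neg : HasDerivAt (-fun y : ℝ => k * y) (-k) 0)
      have h2 := h1.exp
      simpa using h2.const_sub 1
    have h3 := hasDerivAt_iff_tendsto_slope.mp hder
    have h4 : Filter.Tendsto (fun δ : ℝ => (slope (fun t : ℝ => 1 - Real.exp (-(k * t))) 0 δ)⁻¹)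
        (nhdsWithin 0 {(0:ℝ)}ᶜ) (nhds k⁻¹) := h3.inv₀ (ne_of_gt hk)
    refine h4.congr' ?_
    filter_upwards [self_mem_nhdsWithin] with δ hδ
    have hδ0 : δ ≠ 0 := hδ
    rw [slope_def_field]
    simp only [mul_zero, neg_zero, Real.exp_zero, sub_self, sub_zero]
    rw [inv_div]
  have hseq : Filter.Tendsto (fun n : ℕ => (1 : ℝ) / (n + 1)) Filter.atTop
      (nhdsWithin 0 {(0:ℝ)}ᶜ) := by
    apply tendsto_nhdsWithin_of_tendsto_nhds_of_eventually_within
    · exact tendsto_one_div_add_atTop_nhds_zero_nat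
    · filter_upwards with n
      simp only [Set.mem_compl_iff, Set.mem_singleton_iff]
      positivity
  have hlim : Filter.Tendsto
      (fun n : ℕ => ENNReal.ofReal c
        + ENNReal.ofReal ((1 / (n + 1)) / (1 - Real.exp (-(k * (1 / (n + 1)))))))
      Filter.atTop (nhds (ENNReal.ofReal c + ENNReal.ofReal k⁻¹)) := by
    apply Filter.Tendsto.const_add
    exact (ENNReal.continuous_ofReal.tendsto _).comp (hslope.comp hseq)
  have hbound : ∀ n : ℕ, (∫⁻ ω, (if x ω = 0 then (⊤ : ℝ≥0∞)
      else ENNReal.ofReal (max 1 (Real.log (1 / x ω)))) ∂P)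
        ≤ ENNReal.ofReal c
          + ENNReal.ofReal ((1 / (n + 1)) / (1 - Real.exp (-(k * (1 / (n + 1)))))) :=
    fun n => key (1 / (n + 1)) (by positivity)
  have hfinal := ge_of_tendsto' hlim hbound
  refine hfinal.trans (le_of_eq ?_)
  rw [← ENNReal.ofReal_add hc0 (by positivity)]
  congr 1
  rw [hc]
  field_simp
  ring
end
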